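/- arXiv:2012.15459 — 3 statements merged into one kernel-verified Lean document; each statement's English description precedes it below -/
import Mathlib

section
/- If a finite family of completely positive maps (Φ_j) on the space of d×d complex matrices satisfies ∑_j Φ_j = id (the identity map), then each Φ_j is proportional to the identity map, i.e. there exist nonnegative reals p_j with ∑_j p_j = 1 and Φ_j(ρ) = p_j ρ for all ρ. -/
open Matrix BigOperators

/-- A completely positive map on `M_d(ℂ)`, given by some finite Kraus family. -/
def IsCPMap {d : ℕ} (Φ : Matrix (Fin d) (Fin d) ℂ → Matrix (Fin d) (Fin d) ℂ) : Prop :=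
  ∃ (m : ℕ) (K : Fin m → Matrix (Fin d) (Fin d) ℂ),
    ∀ ρ, Φ ρ = ∑ k, K k * ρ * (K k)ᴴ

lemma kraus_key {d : ℕ} {ι : Type} [Fintype ι] (K : ι → Matrix (Fin d) (Fin d) ℂ)
    (h : ∀ ρ, ∑ k, K k * ρ * (K k)ᴴ = ρ) (i j a b : Fin d) :
    ∑ k, K k a i * (starRingEnd ℂ) (K k b j) = if i = a ∧ j = b then 1 else 0 := by
  have H := congrFun (congrFun (h (Matrix.single i j 1)) a) b
  simp [Matrix.sum_apply, Matrix.mul_apply, Matrix.single, Matrix.conjTranspose_apply,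
    Matrix.one_apply, ite_and, Finset.sum_ite_eq, Finset.mul_sum, mul_comm, mul_assoc] at H ⊢
  exact H

lemma kraus_scalar {d : ℕ} (hd : 0 < d) {ι : Type} [Fintype ι]
    (K : ι → Matrix (Fin d) (Fin d) ℂ)
    (h : ∀ ρ, ∑ k, K k * ρ * (K k)ᴴ = ρ) :
    ∃ c : ι → ℂ, ∀ k, K k = c k • 1 := by
  have key := kraus_key K h
  -- off-diagonal entries vanish
  have hoff : ∀ (k : ι) (a i : Fin d), a ≠ i → K k a i = 0 := by
    intro k a i hai
    have H := key i i a a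
    rw [if_neg (by simp [Ne.symm hai])] at H
    have H2 : ∑ k, (Complex.normSq (K k a i) : ℂ) = 0 := by
      rw [← H]; exact Finset.sum_congr rfl (fun k _ => (Complex.mul_conj _).symm)
    have H3 : ∑ k, Complex.normSq (K k a i) = 0 := by
      exact_mod_cast H2
    have := (Finset.sum_eq_zero_iff_of_nonneg (fun k _ => Complex.normSq_nonneg _)).mp H3
      k (Finset.mem_univ k)
    exact Complex.normSq_eq_zero.mp this
  -- diagonal entries equal
  have hdiag : ∀ (k : ι) (i j : Fin d), K k i i = K k j j := by
    intro k i j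
    have h1 : ∑ k, K k i i * (starRingEnd ℂ) (K k j j) = 1 := by
      have := key i j i j; simpa using this
    have h2 : ∑ k, K k j j * (starRingEnd ℂ) (K k i i) = 1 := by
      have := key j i j i; simpa using this
    have h3 : ∑ k, K k i i * (starRingEnd ℂ) (K k i i) = 1 := by
      have := key i i i i; simpa using this
    have h4 : ∑ k, K k j j * (starRingEnd ℂ) (K k j j) = 1 := by
      have := key j j j j; simpa using this
    have H2 : ∑ k, (Complex.normSq (K k i i - K k j j) : ℂ) = 0 := by
      have : ∀ k, (Complex.normSq (K k i i - K k j j) : ℂ)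
          = K k i i * (starRingEnd ℂ) (K k i i) - K k i i * (starRingEnd ℂ) (K k j j)
            - K k j j * (starRingEnd ℂ) (K k i i) + K k j j * (starRingEnd ℂ) (K k j j) := by
        intro k
        rw [← Complex.mul_conj]
        ring_nf
        simp [map_sub]
        ring
      simp_rw [this]
      rw [Finset.sum_add_distrib, Finset.sum_sub_distrib, Finset.sum_sub_distrib,
        h1, h2, h3, h4]
      ring
    have H3 : ∑ k, Complex.normSq (K k i i - K k j j) = 0 := by
      exact_mod_cast H2
    have := (Finset.sum_eq_zero_iff_of_nonneg (fun k _ => Complex.normSq_nonneg _)).mp H3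
      k (Finset.mem_univ k)
    have := Complex.normSq_eq_zero.mp this
    linear_combination this
  refine ⟨fun k => K k ⟨0, hd⟩ ⟨0, hd⟩, fun k => ?_⟩
  ext a b
  by_cases hab : a = b
  · subst hab
    simp [Matrix.one_apply, hdiag k a ⟨0, hd⟩]
  · simp [Matrix.one_apply, hab, hoff k a b hab]

/-- If a finite family of completely positive maps on `M_d(ℂ)` sums to the identity map,
then each map is proportional to the identity map, with nonnegative proportionality
coefficients summing to one. -/
theorem cp_sum_id_implies_proportional {d n : ℕ} (hd : 0 < d)
    (Φ : Fin n → Matrix (Fin d) (Fin d) ℂ → Matrix (Fin d) (Fin d) ℂ)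
    (hcp : ∀ j, IsCPMap (Φ j))
    (hsum : ∀ ρ, ∑ j, Φ j ρ = ρ) :
    ∃ p : Fin n → ℝ, (∀ j, 0 ≤ p j) ∧ (∑ j, p j = 1) ∧
      ∀ j ρ, Φ j ρ = (p j : ℂ) • ρ := by
  choose m K hK using hcp
  have hfull : ∀ ρ, ∑ jk : (Σ j : Fin n, Fin (m j)), K jk.1 jk.2 * ρ * (K jk.1 jk.2)ᴴ = ρ := by
    intro ρ
    calc ∑ jk : (Σ j : Fin n, Fin (m j)), K jk.1 jk.2 * ρ * (K jk.1 jk.2)ᴴ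
        = ∑ j : Fin n, ∑ k : Fin (m j), K j k * ρ * (K j k)ᴴ := by
          rw [← Finset.univ_sigma_univ]
          exact Finset.sum_sigma _ _ _
      _ = ∑ j : Fin n, Φ j ρ := Finset.sum_congr rfl (fun j _ => (hK j ρ).symm)
      _ = ρ := hsum ρ
  obtain ⟨c, hc⟩ := kraus_scalar hd _ hfull
  set p : Fin n → ℝ := fun j => ∑ k : Fin (m j), Complex.normSq (c ⟨j, k⟩) with hp
  have hΦ : ∀ j ρ, Φ j ρ = (p j : ℂ) • ρ := by
    intro j ρ
    rw [hK j ρ]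
    have : ∀ k : Fin (m j), K j k * ρ * (K j k)ᴴ
        = (Complex.normSq (c ⟨j, k⟩) : ℂ) • ρ := by
      intro k
      rw [hc ⟨j, k⟩]
      simp [Matrix.smul_mul, Matrix.mul_smul, smul_smul, mul_comm, Complex.mul_conj]
    simp_rw [this, ← Finset.sum_smul, hp]
    push_cast
    rfl
  refine ⟨p, fun j => Finset.sum_nonneg (fun k _ => Complex.normSq_nonneg _), ?_, hΦ⟩
  have h1 := hsum (1 : Matrix (Fin d) (Fin d) ℂ)
  simp_rw [hΦ] at h1
  rw [← Finset.sum_smul] at h1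
  have := congrFun (congrFun h1 ⟨0, hd⟩) ⟨0, hd⟩
  simp [Matrix.smul_apply, Matrix.one_apply] at this
  exact_mod_cast this
end

section
/- An entanglement-breaking (measure-and-prepare) channel C(ρ) = ∑_j Tr[M_j ρ] σ_j on M_d(ℂ) with d ≥ 2, where (M_j) is a POVM and each σ_j a density matrix, cannot satisfy D ∘ C = id for any quantum channel D; i.e. entanglement-breaking channels on systems of dimension at least 2 are not left-invertible by a channel. -/
/-!
Feed the measure-and-prepare structure of `C` into `id ⊗ D`: the matrix `∑ⱼ Mⱼ ⊗ D(σⱼ)` is a sum of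
Kronecker products of positive semidefinite matrices, hence positive semidefinite. On the other
hand, since `D` is linear and `D (C (Eᵦₐ)) = Eᵦₐ` with `Tr[Mⱼ Eᵦₐ] = (Mⱼ)ₐᵦ`, its `((a, i), (b, k))`
entry is `(Eᵦₐ)ᵢₖ`, so it is the swap operator on `ℂᵈ ⊗ ℂᵈ`. For `d ≥ 2` the swap operator has
eigenvalue `-1` on the antisymmetric vector `e₀ ⊗ e₁ - e₁ ⊗ e₀`.
-/

open Matrix BigOperators
open scoped ComplexOrder Kronecker

/-- A quantum channel on `M_d(ℂ)`: a completely positive trace-preserving map,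
given by a finite Kraus family with `∑ Kᴴ K = 1`. -/
def IsChannel {d : ℕ} (Φ : Matrix (Fin d) (Fin d) ℂ → Matrix (Fin d) (Fin d) ℂ) : Prop :=
  ∃ (m : ℕ) (K : Fin m → Matrix (Fin d) (Fin d) ℂ),
    (∑ k, (K k)ᴴ * K k = 1) ∧ ∀ ρ, Φ ρ = ∑ k, K k * ρ * (K k)ᴴ

namespace IsChannel

variable {d : ℕ} {Φ : Matrix (Fin d) (Fin d) ℂ → Matrix (Fin d) (Fin d) ℂ}

theorem isLinearMap (hΦ : IsChannel Φ) : IsLinearMap ℂ Φ := by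
  obtain ⟨m, K, -, hK⟩ := hΦ
  constructor
  · intro x y
    simp only [hK, mul_add, add_mul, Finset.sum_add_distrib]
  · intro c x
    simp only [hK, mul_smul_comm, smul_mul_assoc, Finset.smul_sum]

theorem map_posSemidef (hΦ : IsChannel Φ) {A : Matrix (Fin d) (Fin d) ℂ} (hA : A.PosSemidef) :
    (Φ A).PosSemidef := by
  obtain ⟨m, K, -, hK⟩ := hΦ
  rw [hK]
  exact posSemidef_sum _ fun k _ => hA.mul_mul_conjTranspose_same (K k)

end IsChannel

namespace Matrix

def swapOperator (n R : Type*) [DecidableEq n] [Zero R] [One R] : Matrix (n × n) (n × n) R :=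
  of fun p q => if p = q.swap then 1 else 0

theorem not_posSemidef_swapOperator {n 𝕜 : Type*} [Fintype n] [DecidableEq n] [RCLike 𝕜]
    {a b : n} (hab : a ≠ b) : ¬ (swapOperator n 𝕜).PosSemidef := by
  intro h
  set v : n × n → 𝕜 := Pi.single (a, b) 1 - Pi.single (b, a) 1
  have hv : star v ⬝ᵥ (swapOperator n 𝕜 *ᵥ v) = -2 := by
    simp [v, swapOperator, sub_dotProduct, mulVec_sub, hab, hab.symm]
    norm_num
  have hnonneg := h.dotProduct_mulVec_nonneg v
  rw [hv] at hnonneg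
  norm_num at hnonneg

theorem sum_kronecker_eq_swapOperator_of_leftInverse {n ι R : Type*} [Fintype n]
    [DecidableEq n] [Fintype ι] [CommRing R] (M σ : ι → Matrix n n R)
    (D : Matrix n n R →ₗ[R] Matrix n n R) (hD : ∀ ρ, D (∑ j, (M j * ρ).trace • σ j) = ρ) :
    ∑ j, M j ⊗ₖ D (σ j) = swapOperator n R := by
  ext ⟨a, i⟩ ⟨b, k⟩
  have hentry := congr_fun₂ (hD (single b a 1)) i k
  simp only [trace_mul_single, MulOpposite.op_one, one_smul, map_sum, map_smul,
    Matrix.sum_apply, Matrix.smul_apply, smul_eq_mul] at hentry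
  simp only [Matrix.sum_apply, kroneckerMap_apply, hentry, swapOperator, of_apply, single_apply,
    Prod.swap_prod_mk, Prod.mk.injEq]
  grind

end Matrix

theorem entanglement_breaking_not_left_invertible_general {d m : ℕ} (hd : 2 ≤ d)
    (M : Fin m → Matrix (Fin d) (Fin d) ℂ)
    (σ : Fin m → Matrix (Fin d) (Fin d) ℂ)
    (hM : ∀ j, (M j).PosSemidef)
    (hσpsd : ∀ j, (σ j).PosSemidef) :
    ¬ ∃ D : Matrix (Fin d) (Fin d) ℂ → Matrix (Fin d) (Fin d) ℂ,
        IsChannel D ∧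
        ∀ ρ : Matrix (Fin d) (Fin d) ℂ,
          D (∑ j, (M j * ρ).trace • σ j) = ρ := by
  rintro ⟨D, hD, hinv⟩
  have hpsd : (∑ j, M j ⊗ₖ D (σ j)).PosSemidef :=
    posSemidef_sum _ fun j _ => (hM j).kronecker (hD.map_posSemidef (hσpsd j))
  have hswap : ∑ j, M j ⊗ₖ D (σ j) = swapOperator (Fin d) ℂ :=
    sum_kronecker_eq_swapOperator_of_leftInverse M σ (hD.isLinearMap.mk' D) hinv
  rw [hswap] at hpsd
  exact not_posSemidef_swapOperator (a := (⟨0, by omega⟩ : Fin d)) (b := ⟨1, by omega⟩)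
    (by simp) hpsd

/-- An entanglement-breaking (measure-and-prepare) channel
`C(ρ) = ∑ⱼ Tr[Mⱼ ρ] σⱼ` on `M_d(ℂ)` with `d ≥ 2` admits no quantum channel `D`
with `D ∘ C = id`. -/
theorem entanglement_breaking_not_left_invertible {d m : ℕ} (hd : 2 ≤ d)
    (M : Fin m → Matrix (Fin d) (Fin d) ℂ)
    (σ : Fin m → Matrix (Fin d) (Fin d) ℂ)
    (hM : ∀ j, (M j).PosSemidef) (hMsum : ∑ j, M j = 1)
    (hσpsd : ∀ j, (σ j).PosSemidef) (hσtr : ∀ j, (σ j).trace = 1) :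
    ¬ ∃ D : Matrix (Fin d) (Fin d) ℂ → Matrix (Fin d) (Fin d) ℂ,
        IsChannel D ∧
        ∀ ρ : Matrix (Fin d) (Fin d) ℂ,
          D (∑ j, (M j * ρ).trace • σ j) = ρ :=
  entanglement_breaking_not_left_invertible_general hd M σ hM hσpsd
end

section
/- The channel N_XY(ρ) = (XρX + YρY)/2 on qubits is entanglement-breaking: it can be written in measure-and-prepare form C(ρ) = ∑_j Tr[M_j ρ] σ_j for a POVM (M_j) and density matrices σ_j. -/
open Matrix BigOperators
open scoped ComplexOrder

noncomputable section

def X : Matrix (Fin 2) (Fin 2) ℂ := !![0, 1; 1, 0]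
def Y : Matrix (Fin 2) (Fin 2) ℂ := !![0, -Complex.I; Complex.I, 0]

/-- The qubit channel `N_XY(ρ) = (XρX + YρY)/2`. -/
def NXY (ρ : Matrix (Fin 2) (Fin 2) ℂ) : Matrix (Fin 2) (Fin 2) ℂ :=
  (2 : ℂ)⁻¹ • (X * ρ * X + Y * ρ * Y)

lemma psd10 : (!![1,0;0,0] : Matrix (Fin 2) (Fin 2) ℂ).PosSemidef := by
  have h : (!![1,0;0,0] : Matrix (Fin 2) (Fin 2) ℂ) = Matrix.diagonal ![1,0] := by
    ext i j; fin_cases i <;> fin_cases j <;> simp [Matrix.diagonal]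
  rw [h]
  refine Matrix.posSemidef_diagonal_iff.mpr ?_
  intro i; fin_cases i <;> simp

lemma psd01 : (!![0,0;0,1] : Matrix (Fin 2) (Fin 2) ℂ).PosSemidef := by
  have h : (!![0,0;0,1] : Matrix (Fin 2) (Fin 2) ℂ) = Matrix.diagonal ![0,1] := by
    ext i j; fin_cases i <;> fin_cases j <;> simp [Matrix.diagonal]
  rw [h]
  refine Matrix.posSemidef_diagonal_iff.mpr ?_
  intro i; fin_cases i <;> simp

/-- `N_XY` is entanglement-breaking: it admits a measure-and-prepare form
`ρ ↦ ∑ⱼ Tr[Mⱼ ρ] σⱼ` with `(Mⱼ)` a POVM and `σⱼ` density matrices. -/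
theorem NXY_entanglement_breaking :
    ∃ (m : ℕ) (M : Fin m → Matrix (Fin 2) (Fin 2) ℂ)
      (σ : Fin m → Matrix (Fin 2) (Fin 2) ℂ),
      (∀ j, (M j).PosSemidef) ∧ (∑ j, M j = 1) ∧
      (∀ j, (σ j).PosSemidef) ∧ (∀ j, (σ j).trace = 1) ∧
      ∀ ρ : Matrix (Fin 2) (Fin 2) ℂ, NXY ρ = ∑ j, (M j * ρ).trace • σ j := by
  refine ⟨2, ![!![1,0;0,0], !![0,0;0,1]], ![!![0,0;0,1], !![1,0;0,0]], ?_, ?_, ?_, ?_, ?_⟩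
  · intro j; fin_cases j
    · exact psd10
    · exact psd01
  · ext i j
    simp [Fin.sum_univ_two]
    fin_cases i <;> fin_cases j <;> simp [Matrix.one_apply]
  · intro j; fin_cases j
    · exact psd01
    · exact psd10
  · intro j; fin_cases j <;> simp [Matrix.trace, Fin.sum_univ_two]
  · intro ρ
    ext i j
    fin_cases i <;> fin_cases j <;>
      simp [NXY, X, Y, Matrix.mul_apply, Matrix.vecMul, dotProduct, Matrix.trace, Matrix.diag,
        Fin.sum_univ_two, Matrix.add_apply, Matrix.smul_apply, Complex.I_sq] <;> ring_nf <;> simp [Complex.I_sq] <;> ring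
end
end
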